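/- Let d be a positive natural number, σ > 0, Δ > 0, and let x, y : Fin d → ℝ satisfy Σᵢ (xᵢ − yᵢ)² ≤ Δ². Then for every α ∈ (1, ∞), the Rényi divergence of order α between the product Gaussian measures ⊗ᵢ N(xᵢ, Δ²σ²) and ⊗ᵢ N(yᵢ, Δ²σ²) on ℝ^d satisfies D_α ≤ α/(2σ²). In other words, the Gaussian mechanism GM(f) = f(D) + Δ·N(0, σ²·I_d), applied to a function f with user-level L2 sensitivity Δ, satisfies (1/(2σ²))-zCDP. -/

import Mathlib

open MeasureTheory ProbabilityTheory Real

/-- The Rényi divergence of order `α` between measures `μ` and `ν`: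
`D_α(μ‖ν) = (α − 1)⁻¹ · log ∫ (dμ/dν)^α dν`. -/
noncomputable def renyiDiv {X : Type*} [MeasurableSpace X] (α : ℝ) (μ ν : Measure X) : ℝ :=
  (α - 1)⁻¹ * Real.log (∫ x, ((μ.rnDeriv ν x).toReal) ^ α ∂ν)

/-! The Radon–Nikodym derivative of a product of probability measures is the product of
the coordinatewise derivatives, so `∫ (dμ/dν)^α dν` factorises and the Rényi divergence of
product measures is the sum of the coordinatewise ones. For two Gaussians of common variance
`v`, completing the square gives
`∫ (dN(m₁,v)/dN(m₂,v))^α dN(m₂,v) = exp (α(α-1)(m₁-m₂)²/(2v))`, i.e. `D_α = α(m₁-m₂)²/(2v)`.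
Summing, `D_α = α‖x-y‖²/(2Δ²σ²) ≤ α/(2σ²)`. -/

open scoped ENNReal NNReal

section Pi

variable {ι : Type*} [Fintype ι] {X : ι → Type*} [∀ i, MeasurableSpace (X i)]
  {μ ν : ∀ i, Measure (X i)} [∀ i, SigmaFinite (μ i)] [∀ i, IsProbabilityMeasure (ν i)]

lemma MeasureTheory.Measure.pi_eq_withDensity_prod {f : ∀ i, X i → ℝ≥0∞}
    (hf : ∀ i, Measurable (f i)) (hμ : ∀ i, μ i = (ν i).withDensity (f i)) :
    Measure.pi μ = (Measure.pi ν).withDensity fun t => ∏ i, f i (t i) := by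
  classical
  refine pi_eq fun s hs => ?_
  have h_indicator : (Set.univ.pi s).indicator (fun t => ∏ i, f i (t i))
      = fun t => ∏ i, (s i).indicator (f i) (t i) := by
    ext t
    simp only [Set.indicator, Set.mem_univ_pi, Finset.prod_ite_zero, Finset.mem_univ, true_imp_iff]
  rw [withDensity_apply _ (.univ_pi hs), ← lintegral_indicator (.univ_pi hs), h_indicator,
    lintegral_prod_eq_prod_lintegral_of_indepFun _ _
      (iIndepFun_pi fun i => ((hf i).indicator (hs i)).aemeasurable)
      fun i => ((hf i).indicator (hs i)).comp (measurable_pi_apply i)]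
  refine Finset.prod_congr rfl fun i _ => ?_
  rw [(measurePreserving_eval ν i).lintegral_comp ((hf i).indicator (hs i)),
    lintegral_indicator (hs i), hμ i, withDensity_apply _ (hs i)]

lemma MeasureTheory.Measure.rnDeriv_pi (hμν : ∀ i, μ i ≪ ν i) :
    (Measure.pi μ).rnDeriv (Measure.pi ν) =ᵐ[Measure.pi ν]
      fun t => ∏ i, (μ i).rnDeriv (ν i) (t i) := by
  rw [pi_eq_withDensity_prod (fun i => measurable_rnDeriv (μ i) (ν i))
    fun i => (withDensity_rnDeriv_eq _ _ (hμν i)).symm]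
  exact rnDeriv_withDensity _ <|
    Finset.measurable_prod _ fun i _ => (measurable_rnDeriv _ _).comp (measurable_pi_apply i)

lemma integral_rnDeriv_pi_rpow (hμν : ∀ i, μ i ≪ ν i) (α : ℝ) :
    ∫ t, ((Measure.pi μ).rnDeriv (Measure.pi ν) t).toReal ^ α ∂Measure.pi ν
      = ∏ i, ∫ s, ((μ i).rnDeriv (ν i) s).toReal ^ α ∂ν i := by
  rw [← integral_fintype_prod_eq_prod]
  refine integral_congr_ae ?_
  filter_upwards [Measure.rnDeriv_pi hμν] with t ht
  rw [ht, ENNReal.toReal_prod, Real.finsetProd_rpow _ _ fun i _ => ENNReal.toReal_nonneg]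

lemma renyiDiv_pi (hμν : ∀ i, μ i ≪ ν i) {α : ℝ}
    (hα : ∀ i, ∫ s, ((μ i).rnDeriv (ν i) s).toReal ^ α ∂ν i ≠ 0) :
    renyiDiv α (Measure.pi μ) (Measure.pi ν) = ∑ i, renyiDiv α (μ i) (ν i) := by
  rw [renyiDiv, integral_rnDeriv_pi_rpow hμν, Real.log_prod fun i _ => hα i, Finset.mul_sum]
  rfl

end Pi

section Gaussian

variable {v : ℝ≥0}

lemma gaussianPDFReal_mul_div_rpow (m₁ m₂ : ℝ) (hv : v ≠ 0) (α x : ℝ) :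
    gaussianPDFReal m₂ v x * (gaussianPDFReal m₁ v x / gaussianPDFReal m₂ v x) ^ α
      = exp (α * (α - 1) * (m₁ - m₂) ^ 2 / (2 * v))
          * gaussianPDFReal (α * m₁ + (1 - α) * m₂) v x := by
  have hc : 0 < (√(2 * π * v))⁻¹ := by positivity
  simp only [gaussianPDFReal]
  rw [mul_div_mul_left _ _ hc.ne', ← exp_sub, rpow_def_of_pos (exp_pos _), log_exp,
    mul_assoc, ← exp_add, mul_left_comm, ← exp_add]
  congr 2
  field_simp
  ring

lemma rnDeriv_gaussianReal_gaussianReal (m₁ m₂ : ℝ) (hv : v ≠ 0) :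
    (gaussianReal m₁ v).rnDeriv (gaussianReal m₂ v) =ᵐ[gaussianReal m₂ v]
      fun x => (gaussianPDF m₂ v x)⁻¹ * gaussianPDF m₁ v x := by
  refine (gaussianReal_absolutelyContinuous m₂ hv).ae_eq ?_
  have h := Measure.rnDeriv_withDensity_right (gaussianReal m₁ v) volume
    (measurable_gaussianPDF m₂ v).aemeasurable
    (ae_of_all _ fun x => (gaussianPDF_pos _ hv x).ne')
    (ae_of_all _ fun _ => gaussianPDF_lt_top.ne)
  rw [← gaussianReal_of_var_ne_zero _ hv] at h
  filter_upwards [h, rnDeriv_gaussianReal m₁ v] with x hx h₁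
  rw [hx, h₁]

lemma integral_rnDeriv_gaussianReal_rpow (m₁ m₂ : ℝ) (hv : v ≠ 0) (α : ℝ) :
    ∫ x, ((gaussianReal m₁ v).rnDeriv (gaussianReal m₂ v) x).toReal ^ α ∂gaussianReal m₂ v
      = exp (α * (α - 1) * (m₁ - m₂) ^ 2 / (2 * v)) := by
  have h_integrand : (fun x => ((gaussianReal m₁ v).rnDeriv (gaussianReal m₂ v) x).toReal ^ α)
      =ᵐ[gaussianReal m₂ v] fun x => ((gaussianPDF m₂ v x)⁻¹ * gaussianPDF m₁ v x).toReal ^ α := by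
    filter_upwards [rnDeriv_gaussianReal_gaussianReal m₁ m₂ hv] with x hx
    rw [hx]
  rw [integral_congr_ae h_integrand, integral_gaussianReal_eq_integral_smul hv]
  simp_rw [gaussianPDF, ENNReal.toReal_mul, ENNReal.toReal_inv,
    ENNReal.toReal_ofReal (gaussianPDFReal_nonneg _ _ _), smul_eq_mul, inv_mul_eq_div,
    gaussianPDFReal_mul_div_rpow _ _ hv]
  rw [integral_const_mul, integral_gaussianPDFReal_eq_one _ hv, mul_one]

lemma renyiDiv_gaussianReal (m₁ m₂ : ℝ) (hv : v ≠ 0) {α : ℝ} (hα : α ≠ 1) :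
    renyiDiv α (gaussianReal m₁ v) (gaussianReal m₂ v) = α * (m₁ - m₂) ^ 2 / (2 * v) := by
  rw [renyiDiv, integral_rnDeriv_gaussianReal_rpow m₁ m₂ hv, log_exp]
  field_simp [sub_ne_zero.2 hα]

end Gaussian

theorem gaussian_mechanism_zCDP_general (d : ℕ) (σ Δ : ℝ) (hσ : 0 < σ) (hΔ : 0 < Δ)
    (x y : Fin d → ℝ) (hxy : ∑ i, (x i - y i) ^ 2 ≤ Δ ^ 2) (α : ℝ) (hα : 1 < α) :
    renyiDiv α
        (Measure.pi fun i : Fin d => gaussianReal (x i) ((Δ ^ 2 * σ ^ 2).toNNReal))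
        (Measure.pi fun i : Fin d => gaussianReal (y i) ((Δ ^ 2 * σ ^ 2).toNNReal))
      ≤ α / (2 * σ ^ 2) := by
  set v := (Δ ^ 2 * σ ^ 2).toNNReal
  have hv : (v : ℝ) = Δ ^ 2 * σ ^ 2 := Real.coe_toNNReal _ (by positivity)
  have hv0 : v ≠ 0 := by rw [← NNReal.coe_ne_zero, hv]; positivity
  have hac (i : Fin d) : gaussianReal (x i) v ≪ gaussianReal (y i) v :=
    (gaussianReal_absolutelyContinuous _ hv0).trans (gaussianReal_absolutelyContinuous' _ hv0)
  rw [renyiDiv_pi hac fun i => by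
    rw [integral_rnDeriv_gaussianReal_rpow _ _ hv0]; exact (exp_pos _).ne']
  simp_rw [renyiDiv_gaussianReal _ _ hv0 hα.ne', hv, ← Finset.sum_div, ← Finset.mul_sum]
  calc (α * ∑ i, (x i - y i) ^ 2) / (2 * (Δ ^ 2 * σ ^ 2))
      ≤ α * Δ ^ 2 / (2 * (Δ ^ 2 * σ ^ 2)) := by gcongr
    _ = α / (2 * σ ^ 2) := by field_simp

/-- The Gaussian mechanism with noise multiplier `σ` and sensitivity `Δ` satisfies
`(1/(2σ²))`-zCDP: for outputs `x, y : Fin d → ℝ` differing by at most `Δ` in L2 norm,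
the Rényi divergence of order `α` between the product Gaussian measures
`⊗ᵢ N(xᵢ, Δ²σ²)` and `⊗ᵢ N(yᵢ, Δ²σ²)` is at most `α/(2σ²)`. -/
theorem gaussian_mechanism_zCDP (d : ℕ) (hd : 0 < d) (σ Δ : ℝ) (hσ : 0 < σ) (hΔ : 0 < Δ)
    (x y : Fin d → ℝ) (hxy : ∑ i, (x i - y i) ^ 2 ≤ Δ ^ 2) (α : ℝ) (hα : 1 < α) :
    renyiDiv α
        (Measure.pi fun i : Fin d => gaussianReal (x i) ((Δ ^ 2 * σ ^ 2).toNNReal))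
        (Measure.pi fun i : Fin d => gaussianReal (y i) ((Δ ^ 2 * σ ^ 2).toNNReal))
      ≤ α / (2 * σ ^ 2) :=
  gaussian_mechanism_zCDP_general d σ Δ hσ hΔ x y hxy α hα
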